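/- Let P_k ∈ ℤ[X_0,...,X_k,Y_0,...,Y_k] be the Witt addition polynomials and S_k(X,Y) = P_k(X,0,...,0,Y,0,...,0). Then for every l ≥ 0, the following congruence of formal power series holds: AH(X) + AH(Y) ≡ AH(S_0(X,Y)) + ... + AH(S_l(X,Y)) modulo the ideal (X,Y)^{p^{l+1}} in ℚ_p[[X,Y]], where AH(X) = Σ_{i≥0} X^{p^i}/p^i. -/

import Mathlib

open MvPolynomial

/-! Every `S_k` is homogeneous of degree `p^k`: by strong induction, since
`p^n S_n = X^{p^n} + Y^{p^n} - ∑_{j<n} p^j S_j^{p^{n-j}}` by the ghost identity. Hence the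
coefficient of both sides in a degree `m` vanishes unless `m = p^e`, and then only the terms
`S_k^{p^{e-k}} / p^{e-k}` with `k ≤ e ≤ l` survive; multiplied by `p^e` they form the `e`-th
ghost identity `∑_{k ≤ e} p^k S_k^{p^{e-k}} = X^{p^e} + Y^{p^e}`. -/

/-- The coefficient (at the multidegree `d`) of the formal power series
`AH(Q) = ∑_{i≥0} Q^{p^i}/p^i` in `ℚ_p[[X,Y]]`, where `Q ∈ ℚ_p[X,Y]` has no
constant term, so that only the finitely many `i` with `p^i ≤ |d|` contribute. -/
noncomputable def ahSubstCoeff (p : ℕ) [Fact p.Prime] (Q : MvPolynomial (Fin 2) ℚ_[p])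
    (d : Fin 2 →₀ ℕ) : ℚ_[p] :=
  ∑ i ∈ Finset.range ((d.sum fun _ n => n) + 1),
    ((p : ℚ_[p]) ^ i)⁻¹ * MvPolynomial.coeff d (Q ^ p ^ i)

/-- `S_k(X,Y) = P_k(X,0,…,0,Y,0,…,0)`, where `P_k` is the `k`-th Witt vector
addition polynomial. -/
noncomputable def wittS (p : ℕ) [Fact p.Prime] (k : ℕ) : MvPolynomial (Fin 2) ℤ :=
  MvPolynomial.aeval (fun q : Fin 2 × ℕ => if q.2 = 0 then MvPolynomial.X q.1 else 0)
    (WittVector.wittAdd p k)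

theorem MvPolynomial.IsHomogeneous.of_C_mul {σ R : Type*} [CommSemiring R] [NoZeroDivisors R]
    {φ : MvPolynomial σ R} {r : R} {n : ℕ} (h : (C r * φ).IsHomogeneous n) (hr : r ≠ 0) :
    φ.IsHomogeneous n := fun d hd => h (by rw [coeff_C_mul]; exact mul_ne_zero hr hd)

section WittS

variable {p : ℕ} [hp : Fact p.Prime]

theorem wittS_ghost (n : ℕ) :
    ∑ j ∈ Finset.range (n + 1), (p : MvPolynomial (Fin 2) ℤ) ^ j * wittS p j ^ p ^ (n - j) =
      X 0 ^ p ^ n + X 1 ^ p ^ n := by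
  set ev := aeval (R := ℤ) fun q : Fin 2 × ℕ =>
    if q.2 = 0 then (X q.1 : MvPolynomial (Fin 2) ℤ) else 0
  have hW : ∀ b : Fin 2, ev (rename (Prod.mk b) (wittPolynomial p ℤ n)) = X b ^ p ^ n := by
    intro b
    rw [aeval_rename, aeval_wittPolynomial, Finset.sum_eq_single_of_mem 0 (by simp)]
    · simp
    · intro i _ hi
      simp [hi, zero_pow (pow_ne_zero _ hp.out.ne_zero)]
  have h := congrArg ev (wittStructureInt_prop p (X (0 : Fin 2) + X 1) n)
  rwa [aeval_bind₁, aeval_bind₁, aeval_wittPolynomial, map_add, aeval_X, aeval_X, hW, hW] at h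

theorem wittS_isHomogeneous (n : ℕ) : (wittS p n).IsHomogeneous (p ^ n) := by
  induction n using Nat.strong_induction_on with
  | _ n ih =>
    have hghost := wittS_ghost (p := p) n
    rw [Finset.sum_range_succ, Nat.sub_self, pow_zero, pow_one, ← eq_sub_iff_add_eq',
      ← map_natCast C, ← map_pow] at hghost
    refine IsHomogeneous.of_C_mul ?_ (pow_ne_zero n (Int.natCast_ne_zero.mpr hp.out.ne_zero))
    rw [hghost]
    refine ((isHomogeneous_X_pow _ _).add (isHomogeneous_X_pow _ _)).sub
      (IsHomogeneous.sum _ _ _ fun j hj => ?_)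
    have hjn : j < n := Finset.mem_range.mp hj
    have hpow := (ih j hjn).pow (p ^ (n - j))
    rw [← pow_add, Nat.add_sub_cancel' hjn.le] at hpow
    rw [← map_pow]
    exact hpow.C_mul _

theorem wittS_ghost_div {K : Type*} [Field K] [CharZero K] (e : ℕ) :
    ∑ k ∈ Finset.range (e + 1),
        C ((p : K) ^ (e - k))⁻¹ * (wittS p k).map (Int.castRingHom K) ^ p ^ (e - k) =
      C ((p : K) ^ e)⁻¹ * (X 0 ^ p ^ e + X 1 ^ p ^ e) := by
  have h := congrArg (MvPolynomial.map (Int.castRingHom K)) (wittS_ghost (p := p) e)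
  simp only [map_sum, map_mul, map_pow, map_natCast, map_add, MvPolynomial.map_X] at h
  rw [← h, Finset.mul_sum]
  refine Finset.sum_congr rfl fun k hk => ?_
  have hke : k ≤ e := Nat.lt_succ_iff.mp (Finset.mem_range.mp hk)
  have hp0 : (p : K) ≠ 0 := Nat.cast_ne_zero.mpr hp.out.ne_zero
  have hC :
      C ((p : K) ^ (e - k))⁻¹ = C ((p : K) ^ e)⁻¹ * (p : MvPolynomial (Fin 2) K) ^ k := by
    rw [← map_natCast C, ← map_pow, ← C_mul, ← Nat.sub_add_cancel hke, pow_add,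
      Nat.add_sub_cancel, mul_inv, inv_mul_cancel_right₀ (pow_ne_zero _ hp0)]
  rw [hC, mul_assoc]

end WittS

section AHCoeff

variable {p : ℕ} [hp : Fact p.Prime] {Q : MvPolynomial (Fin 2) ℚ_[p]} {k : ℕ}
  {d : Fin 2 →₀ ℕ}

theorem ahSubstCoeff_eq_zero_of_isHomogeneous (hQ : Q.IsHomogeneous (p ^ k))
    (hd : ∀ i, d.degree ≠ p ^ (k + i)) : ahSubstCoeff p Q d = 0 :=
  Finset.sum_eq_zero fun i _ => by
    rw [(hQ.pow (p ^ i)).coeff_eq_zero (by rw [← pow_add]; exact hd i), mul_zero]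

theorem ahSubstCoeff_of_isHomogeneous (hQ : Q.IsHomogeneous (p ^ k)) {e : ℕ}
    (hd : d.degree = p ^ e) :
    ahSubstCoeff p Q d = if k ≤ e then ((p : ℚ_[p]) ^ (e - k))⁻¹ * coeff d (Q ^ p ^ (e - k))
      else 0 := by
  have hinj : ∀ i, d.degree = p ^ (k + i) → e = k + i := fun i h =>
    Nat.pow_right_injective hp.out.two_le (hd.symm.trans h)
  split_ifs with hke
  · refine Finset.sum_eq_single_of_mem (e - k) (Finset.mem_range.mpr ?_) fun i _ hi => ?_
    · have : e < p ^ e := Nat.lt_pow_self hp.out.one_lt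
      change e - k < d.degree + 1
      omega
    · have hdeg : d.degree ≠ p ^ k * p ^ i := by
        rw [← pow_add]
        exact fun h => hi (by have := hinj i h; omega)
      rw [(hQ.pow (p ^ i)).coeff_eq_zero hdeg, mul_zero]
  · exact ahSubstCoeff_eq_zero_of_isHomogeneous hQ fun i h => hke (by have := hinj i h; omega)

end AHCoeff

/-- For every `l ≥ 0` the congruence of formal power series
`AH(X) + AH(Y) ≡ AH(S_0(X,Y)) + ⋯ + AH(S_l(X,Y)) mod (X,Y)^{p^{l+1}}`
holds in `ℚ_p[[X,Y]]`: the coefficients at every multidegree `d` of total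
degree `< p^{l+1}` agree. -/
theorem stmt_14 (p : ℕ) [Fact p.Prime] (l : ℕ) :
    ∀ d : Fin 2 →₀ ℕ, (d.sum fun _ n => n) < p ^ (l + 1) →
      ahSubstCoeff p (X 0) d + ahSubstCoeff p (X 1) d =
        ∑ k ∈ Finset.range (l + 1),
          ahSubstCoeff p ((wittS p k).map (Int.castRingHom ℚ_[p])) d := by
  intro d hd
  have hX (b : Fin 2) : (X b : MvPolynomial (Fin 2) ℚ_[p]).IsHomogeneous (p ^ 0) := by
    simpa using isHomogeneous_X ℚ_[p] b
  have hS (k : ℕ) : ((wittS p k).map (Int.castRingHom ℚ_[p])).IsHomogeneous (p ^ k) :=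
    (wittS_isHomogeneous k).map _
  by_cases hpow : ∃ e, d.degree = p ^ e
  · obtain ⟨e, he⟩ := hpow
    have hel : e < l + 1 :=
      (Nat.pow_lt_pow_iff_right (Fact.out : p.Prime).one_lt).mp (he ▸ hd)
    have hrange : (Finset.range (l + 1)).filter (· ≤ e) = Finset.range (e + 1) := by
      ext k; simp only [Finset.mem_filter, Finset.mem_range]; omega
    simp only [ahSubstCoeff_of_isHomogeneous (hX _) he, ahSubstCoeff_of_isHomogeneous (hS _) he,
      ← Finset.sum_filter, hrange]
    simpa [coeff_sum, coeff_C_mul, mul_add] using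
      (congrArg (coeff d) (wittS_ghost_div (p := p) (K := ℚ_[p]) e)).symm
  · push Not at hpow
    simp only [ahSubstCoeff_eq_zero_of_isHomogeneous (hX _) fun i => hpow _,
      ahSubstCoeff_eq_zero_of_isHomogeneous (hS _) fun i => hpow _, Finset.sum_const_zero, add_zero]
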